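/- arXiv:2310.09947 — 2 statements merged into one kernel-verified Lean document; each statement's English description precedes it below -/
import Mathlib

section
/- Assume in addition that a ∈ L^∞([0,T]) and Σ_{n≥1} λ_n² B_n² < ∞. Then at every t₀ ∈ [0,T] at which A is differentiable with A′(t₀) = a(t₀), the map t ↦ u(t) from [0,T] to L²(0,1) is differentiable at t₀; its derivative is −a(t₀) Σ_{n≥1} λ_n B_n e^{−λ_n A(t₀)} φ_n (the series converging in L²(0,1)), and ‖∂_t u(t₀)‖_{L²(0,1)} ≤ ‖a‖_{L^∞([0,T])} (Σ_{n≥1} λ_n² B_n²)^{1/2}. -/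
open MeasureTheory Set Filter
open scoped Topology ENNReal NNReal
open scoped RealInnerProductSpace

noncomputable section

/-- The measure on the interval `(0,1)`. -/
abbrev mu01 : MeasureTheory.Measure ℝ := MeasureTheory.volume.restrict (Set.Ioo (0:ℝ) 1)

/-- The real Hilbert space `L²(0,1)`. -/
abbrev L2 := MeasureTheory.Lp ℝ 2 mu01

lemma exists_hasSum_of_sq (φ : HilbertBasis ℕ ℝ L2) {c : ℕ → ℝ}
    (hc : Summable fun n => c n ^ 2) :
    ∃ x : L2, HasSum (fun n => c n • φ n) x := by
  have hmem : Memℓp c 2 := by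
    apply memℓp_gen
    have h : (fun n => ‖c n‖ ^ (2 : ℝ≥0∞).toReal) = fun n => c n ^ 2 := by
      ext n
      rw [(by simp : ((2:ℝ≥0∞).toReal) = ((2:ℕ):ℝ)), Real.rpow_natCast, Real.norm_eq_abs,
        sq_abs]
    rw [h]; exact hc
  exact ⟨φ.repr.symm ⟨c, hmem⟩, φ.hasSum_repr_symm ⟨c, hmem⟩⟩

lemma inner_of_hasSum (φ : HilbertBasis ℕ ℝ L2) {c : ℕ → ℝ} {x : L2}
    (h : HasSum (fun n => c n • φ n) x) (n : ℕ) : ⟪φ n, x⟫ = c n := by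
  classical
  have h2 := h.mapL (innerSL ℝ (φ n))
  have horth := φ.orthonormal
  rw [orthonormal_iff_ite] at horth
  have h3 : HasSum (fun m => if m = n then c n else 0) ⟪φ n, x⟫ := by
    refine h2.congr_fun fun m => ?_
    rw [innerSL_apply_apply, real_inner_smul_right, horth n m]
    rcases eq_or_ne m n with rfl | hmn
    · simp
    · simp [hmn, hmn.symm]
  exact h3.unique (hasSum_ite_eq n (c n))

lemma hasSum_sq_of_hasSum (φ : HilbertBasis ℕ ℝ L2) {c : ℕ → ℝ} {x : L2}
    (h : HasSum (fun n => c n • φ n) x) :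
    HasSum (fun n => c n ^ 2) (‖x‖ ^ 2) := by
  have h1 := φ.hasSum_inner_mul_inner x x
  have h2 : ∀ m, ⟪x, φ m⟫ * ⟪φ m, x⟫ = c m ^ 2 := by
    intro m
    rw [real_inner_comm (φ m) x, inner_of_hasSum φ h m]
    ring
  have h3 : ⟪x, x⟫ = ‖x‖ ^ 2 := real_inner_self_eq_norm_sq x
  rw [← h3]
  exact h1.congr_fun fun m => (h2 m).symm

lemma exp_est1 {l : ℝ} (hl : 0 ≤ l) {s t : ℝ} (hs : 0 ≤ s) (ht : 0 ≤ t) :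
    |Real.exp (-(l * t)) - Real.exp (-(l * s))| ≤ l * |t - s| := by
  have hderiv : ∀ x ∈ Ici (0:ℝ),
      HasDerivWithinAt (fun y => Real.exp (-(l * y))) (-l * Real.exp (-(l * x))) (Ici 0) x := by
    intro x _
    have h1 : HasDerivAt (fun y : ℝ => -(l * y)) (-l) x := by
      simpa using ((hasDerivAt_id x).const_mul (-l))
    have := (Real.hasDerivAt_exp (-(l * x))).comp x h1
    simpa [mul_comm, Function.comp_def] using this.hasDerivWithinAt
  have hbound : ∀ x ∈ Ici (0:ℝ), ‖-l * Real.exp (-(l * x))‖ ≤ l := by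
    intro x hx
    rw [Real.norm_eq_abs, abs_mul, abs_neg, abs_of_nonneg hl, Real.abs_exp]
    calc l * Real.exp (-(l * x)) ≤ l * 1 := by
          gcongr
          exact Real.exp_le_one_iff.2 (by nlinarith [hx.out])
      _ = l := mul_one l
  have key := (convex_Ici (0:ℝ)).norm_image_sub_le_of_norm_hasDerivWithin_le
    hderiv hbound hs ht
  simpa [Real.norm_eq_abs] using key

lemma exp_est2 {l : ℝ} (hl : 0 ≤ l) {s t : ℝ} (hs : 0 ≤ s) (ht : 0 ≤ t) :
    |Real.exp (-(l * t)) - Real.exp (-(l * s)) + l * (t - s) * Real.exp (-(l * s))|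
      ≤ l ^ 2 * (t - s) ^ 2 := by
  have huIcc : uIcc s t ⊆ Ici (0:ℝ) := by
    intro x hx
    exact le_trans (le_inf hs ht) hx.1
  have hderiv : ∀ x ∈ uIcc s t,
      HasDerivWithinAt (fun y => Real.exp (-(l * y)) + (l * Real.exp (-(l * s))) * y)
        (-l * Real.exp (-(l * x)) + l * Real.exp (-(l * s))) (uIcc s t) x := by
    intro x _
    have h1 : HasDerivAt (fun y : ℝ => -(l * y)) (-l) x := by
      simpa using ((hasDerivAt_id x).const_mul (-l))
    have h2 := (Real.hasDerivAt_exp (-(l * x))).comp x h1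
    have h3 : HasDerivAt (fun y : ℝ => (l * Real.exp (-(l * s))) * y)
        (l * Real.exp (-(l * s))) x := by
      simpa using ((hasDerivAt_id x).const_mul (l * Real.exp (-(l * s))))
    have := (h2.add h3)
    simpa [mul_comm, Function.comp_def, Pi.add_def] using this.hasDerivWithinAt
  have hbound : ∀ x ∈ uIcc s t,
      ‖-l * Real.exp (-(l * x)) + l * Real.exp (-(l * s))‖ ≤ l ^ 2 * |t - s| := by
    intro x hx
    have hx0 : (0:ℝ) ≤ x := huIcc hx
    have h1 : -l * Real.exp (-(l * x)) + l * Real.exp (-(l * s))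
        = -(l * (Real.exp (-(l * x)) - Real.exp (-(l * s)))) := by ring
    rw [Real.norm_eq_abs, h1, abs_neg, abs_mul, abs_of_nonneg hl]
    have h2 : |Real.exp (-(l * x)) - Real.exp (-(l * s))| ≤ l * |x - s| :=
      exp_est1 hl hs hx0
    have h3 : |x - s| ≤ |t - s| := abs_sub_left_of_mem_uIcc hx
    calc l * |Real.exp (-(l * x)) - Real.exp (-(l * s))| ≤ l * (l * |x - s|) := by gcongr
      _ ≤ l * (l * |t - s|) := by gcongr
      _ = l ^ 2 * |t - s| := by ring
  have key := (convex_uIcc s t).norm_image_sub_le_of_norm_hasDerivWithin_le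
    hderiv hbound left_mem_uIcc right_mem_uIcc
  have h4 : (fun y => Real.exp (-(l * y)) + (l * Real.exp (-(l * s))) * y) t
      - (fun y => Real.exp (-(l * y)) + (l * Real.exp (-(l * s))) * y) s
      = Real.exp (-(l * t)) - Real.exp (-(l * s)) + l * (t - s) * Real.exp (-(l * s)) := by
    simp only []
    ring
  rw [h4, Real.norm_eq_abs, Real.norm_eq_abs] at key
  calc |Real.exp (-(l * t)) - Real.exp (-(l * s)) + l * (t - s) * Real.exp (-(l * s))|
      ≤ l ^ 2 * |t - s| * |t - s| := key
    _ = l ^ 2 * (t - s) ^ 2 := by rw [mul_assoc, abs_mul_abs_self]; ring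

set_option maxHeartbeats 2000000 in
lemma core (φ : HilbertBasis ℕ ℝ L2) (lam B : ℕ → ℝ) (hlam : ∀ n, 0 ≤ lam n)
    (hsumB : Summable fun n => B n ^ 2)
    (hsum : Summable fun n => lam n ^ 2 * B n ^ 2)
    (s₀ : ℝ) (hs₀ : 0 ≤ s₀) :
    ∃ d : L2,
      HasSum (fun n => (lam n * B n * Real.exp (-(lam n) * s₀)) • φ n) d ∧
      HasDerivWithinAt (fun s => ∑' n, (B n * Real.exp (-(lam n) * s)) • φ n)
        (-d) (Ici 0) s₀ ∧
      ‖d‖ ≤ Real.sqrt (∑' n, lam n ^ 2 * B n ^ 2) := by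
  have hexp1 : ∀ (n : ℕ) {s : ℝ}, 0 ≤ s → Real.exp (-(lam n) * s) ≤ 1 := by
    intro n s hs
    exact Real.exp_le_one_iff.2 (by nlinarith [hlam n])
  have hexp2 : ∀ (n : ℕ) {s : ℝ}, 0 ≤ s → Real.exp (-(lam n) * s) ^ 2 ≤ 1 := by
    intro n s hs
    have h1 := hexp1 n hs
    have h2 := Real.exp_pos (-(lam n) * s)
    nlinarith
  -- construct d
  have hesq : ∀ n, (lam n * B n * Real.exp (-(lam n) * s₀)) ^ 2
      ≤ lam n ^ 2 * B n ^ 2 := by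
    intro n
    calc (lam n * B n * Real.exp (-(lam n) * s₀)) ^ 2
        = (lam n * B n) ^ 2 * Real.exp (-(lam n) * s₀) ^ 2 := by ring
      _ ≤ (lam n * B n) ^ 2 * 1 := mul_le_mul_of_nonneg_left (hexp2 n hs₀) (sq_nonneg _)
      _ = lam n ^ 2 * B n ^ 2 := by ring
  have hse : Summable fun n => (lam n * B n * Real.exp (-(lam n) * s₀)) ^ 2 :=
    Summable.of_nonneg_of_le (fun n => sq_nonneg _) hesq hsum
  obtain ⟨d, hd⟩ := exists_hasSum_of_sq φ hse
  set U : ℝ → L2 := fun s => ∑' n, (B n * Real.exp (-(lam n) * s)) • φ n with hUdef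
  have hUsum : ∀ s : ℝ, 0 ≤ s →
      HasSum (fun n => (B n * Real.exp (-(lam n) * s)) • φ n) (U s) := by
    intro s hs
    have hcs : Summable fun n => (B n * Real.exp (-(lam n) * s)) ^ 2 := by
      refine Summable.of_nonneg_of_le (fun n => sq_nonneg _) (fun n => ?_) hsumB
      calc (B n * Real.exp (-(lam n) * s)) ^ 2
          = B n ^ 2 * Real.exp (-(lam n) * s) ^ 2 := by ring
        _ ≤ B n ^ 2 * 1 := mul_le_mul_of_nonneg_left (hexp2 n hs) (sq_nonneg _)
        _ = B n ^ 2 := by ring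
    obtain ⟨x, hx⟩ := exists_hasSum_of_sq φ hcs
    have hxe : U s = x := hx.tsum_eq
    rw [hxe]; exact hx
  have hUderiv : HasDerivWithinAt U (-d) (Ici 0) s₀ := by
    rw [hasDerivWithinAt_iff_isLittleO, Asymptotics.isLittleO_iff]
    intro c hc
    have hε : 0 < c / 3 := by linarith
    obtain ⟨N, hN⟩ : ∃ N, ∑' k, (lam (k + N) ^ 2 * B (k + N) ^ 2) < (c / 3) ^ 2 := by
      have htail := tendsto_sum_nat_add (fun n => lam n ^ 2 * B n ^ 2)
      exact (htail.eventually (eventually_lt_nhds (by positivity))).exists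
    set C : ℝ := ∑ n ∈ Finset.range N, lam n ^ 4 * B n ^ 2 with hCdef
    have hC0 : 0 ≤ C := Finset.sum_nonneg fun n _ => by positivity
    set δ : ℝ := (c / 3) / Real.sqrt (C + 1) with hδdef
    have hδ : 0 < δ := by positivity
    have hδ2 : δ ^ 2 * C ≤ (c / 3) ^ 2 := by
      rw [hδdef, div_pow, Real.sq_sqrt (by linarith)]
      rw [div_mul_eq_mul_div, div_le_iff₀ (by linarith)]
      nlinarith [sq_nonneg (c / 3)]
    have hball : ∀ᶠ s in 𝓝[Ici (0:ℝ)] s₀, |s - s₀| ≤ δ := by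
      apply Filter.Eventually.filter_mono nhdsWithin_le_nhds
      filter_upwards [Metric.closedBall_mem_nhds s₀ hδ] with s hsb
      simpa [Real.dist_eq] using hsb
    filter_upwards [hball, self_mem_nhdsWithin] with s hsδ hs
    have hs' : (0:ℝ) ≤ s := hs
    set r : ℕ → ℝ := fun n => B n * Real.exp (-(lam n) * s)
        - B n * Real.exp (-(lam n) * s₀)
        + (s - s₀) * (lam n * B n * Real.exp (-(lam n) * s₀)) with hrdef
    have hX : HasSum (fun n => r n • φ n) (U s - U s₀ + (s - s₀) • d) := by
      have h1 := ((hUsum s hs').sub (hUsum s₀ hs₀)).add (hd.const_smul (s - s₀))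
      refine h1.congr_fun fun n => ?_
      simp only [hrdef]
      rw [add_smul, sub_smul, mul_smul (s - s₀)]
    have hXsq := hasSum_sq_of_hasSum φ hX
    have hrs : Summable fun n => r n ^ 2 := hXsq.summable
    have hw : ∀ n, r n = B n * (Real.exp (-(lam n * s)) - Real.exp (-(lam n * s₀))
        + lam n * (s - s₀) * Real.exp (-(lam n * s₀))) := by
      intro n
      simp only [hrdef, neg_mul]
      ring
    have hhead : ∀ n, r n ^ 2 ≤ (lam n ^ 4 * B n ^ 2) * (s - s₀) ^ 4 := by
      intro n
      have h2 := exp_est2 (hlam n) hs₀ hs'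
      rw [hw n]
      set w : ℝ := Real.exp (-(lam n * s)) - Real.exp (-(lam n * s₀))
        + lam n * (s - s₀) * Real.exp (-(lam n * s₀)) with hwdef
      have h3 : w ^ 2 ≤ (lam n ^ 2 * (s - s₀) ^ 2) ^ 2 := by
        rw [← sq_abs]
        exact pow_le_pow_left₀ (abs_nonneg w) h2 2
      calc (B n * w) ^ 2 = B n ^ 2 * w ^ 2 := by ring
        _ ≤ B n ^ 2 * (lam n ^ 2 * (s - s₀) ^ 2) ^ 2 :=
            mul_le_mul_of_nonneg_left h3 (sq_nonneg _)
        _ = (lam n ^ 4 * B n ^ 2) * (s - s₀) ^ 4 := by ring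
    have htailb : ∀ n, r n ^ 2 ≤ (4 * (s - s₀) ^ 2) * (lam n ^ 2 * B n ^ 2) := by
      intro n
      have h1 := exp_est1 (hlam n) hs₀ hs'
      have h2 : |lam n * (s - s₀) * Real.exp (-(lam n * s₀))| ≤ lam n * |s - s₀| := by
        rw [abs_mul, abs_mul, abs_of_nonneg (hlam n), Real.abs_exp]
        have h5 : Real.exp (-(lam n * s₀)) ≤ 1 := by
          rw [← neg_mul]; exact hexp1 n hs₀
        calc lam n * |s - s₀| * Real.exp (-(lam n * s₀))
            ≤ lam n * |s - s₀| * 1 :=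
              mul_le_mul_of_nonneg_left h5 (mul_nonneg (hlam n) (abs_nonneg _))
          _ = lam n * |s - s₀| := mul_one _
      rw [hw n]
      set w : ℝ := Real.exp (-(lam n * s)) - Real.exp (-(lam n * s₀))
        + lam n * (s - s₀) * Real.exp (-(lam n * s₀)) with hwdef
      have h3 : |w| ≤ 2 * lam n * |s - s₀| := by
        calc |w| ≤ |Real.exp (-(lam n * s)) - Real.exp (-(lam n * s₀))|
              + |lam n * (s - s₀) * Real.exp (-(lam n * s₀))| := abs_add_le _ _
          _ ≤ lam n * |s - s₀| + lam n * |s - s₀| := add_le_add h1 h2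
          _ = 2 * lam n * |s - s₀| := by ring
      have h4 : w ^ 2 ≤ (2 * lam n * |s - s₀|) ^ 2 := by
        rw [← sq_abs]
        exact pow_le_pow_left₀ (abs_nonneg w) h3 2
      calc (B n * w) ^ 2 = B n ^ 2 * w ^ 2 := by ring
        _ ≤ B n ^ 2 * (2 * lam n * |s - s₀|) ^ 2 :=
            mul_le_mul_of_nonneg_left h4 (sq_nonneg _)
        _ = (4 * |s - s₀| ^ 2) * (lam n ^ 2 * B n ^ 2) := by ring
        _ = (4 * (s - s₀) ^ 2) * (lam n ^ 2 * B n ^ 2) := by rw [sq_abs]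
    have htails : Summable fun k => r (k + N) ^ 2 := (summable_nat_add_iff N).2 hrs
    have htailg : Summable fun k => lam (k + N) ^ 2 * B (k + N) ^ 2 :=
      (summable_nat_add_iff N).2 hsum
    have htailsum : ∑' k, r (k + N) ^ 2 ≤ (4 * (s - s₀) ^ 2) * ((c / 3) ^ 2) := by
      calc ∑' k, r (k + N) ^ 2
          ≤ ∑' k, (4 * (s - s₀) ^ 2) * (lam (k + N) ^ 2 * B (k + N) ^ 2) :=
            Summable.tsum_le_tsum (fun k => htailb (k + N)) htails (htailg.mul_left _)
        _ = (4 * (s - s₀) ^ 2) * ∑' k, lam (k + N) ^ 2 * B (k + N) ^ 2 :=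
            tsum_mul_left
        _ ≤ (4 * (s - s₀) ^ 2) * ((c / 3) ^ 2) :=
            mul_le_mul_of_nonneg_left hN.le (by positivity)
    have hheadsum : ∑ n ∈ Finset.range N, r n ^ 2 ≤ C * (s - s₀) ^ 4 := by
      rw [hCdef, Finset.sum_mul]
      exact Finset.sum_le_sum fun n _ => hhead n
    have hd2' : (s - s₀) ^ 2 ≤ δ ^ 2 := by
      rw [← sq_abs]
      exact pow_le_pow_left₀ (abs_nonneg _) hsδ 2
    have hXnorm2 : ‖U s - U s₀ + (s - s₀) • d‖ ^ 2 ≤ (c * |s - s₀|) ^ 2 := by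
      rw [← hXsq.tsum_eq]
      calc ∑' n, r n ^ 2
          = (∑ n ∈ Finset.range N, r n ^ 2) + ∑' k, r (k + N) ^ 2 :=
            (Summable.sum_add_tsum_nat_add N hrs).symm
        _ ≤ C * (s - s₀) ^ 4 + (4 * (s - s₀) ^ 2) * ((c / 3) ^ 2) :=
            add_le_add hheadsum htailsum
        _ ≤ (c * |s - s₀|) ^ 2 := by
            have e1 : C * (s - s₀) ^ 4 ≤ (δ ^ 2 * C) * (s - s₀) ^ 2 := by
              have h7 := mul_le_mul_of_nonneg_left hd2'
                (mul_nonneg hC0 (sq_nonneg (s - s₀)))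
              nlinarith [h7]
            have e2 : (δ ^ 2 * C) * (s - s₀) ^ 2 ≤ (c / 3) ^ 2 * (s - s₀) ^ 2 :=
              mul_le_mul_of_nonneg_right hδ2 (sq_nonneg _)
            have e3 : (c * |s - s₀|) ^ 2 = c ^ 2 * (s - s₀) ^ 2 := by
              rw [mul_pow, sq_abs]
            rw [e3]
            nlinarith [mul_nonneg (sq_nonneg c) (sq_nonneg (s - s₀))]
    have hXn : ‖U s - U s₀ + (s - s₀) • d‖ ≤ c * |s - s₀| := by
      have h0 : 0 ≤ c * |s - s₀| := by positivity
      nlinarith [norm_nonneg (U s - U s₀ + (s - s₀) • d)]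
    have hrw : U s - U s₀ - (s - s₀) • (-d) = U s - U s₀ + (s - s₀) • d := by
      rw [smul_neg, sub_neg_eq_add]
    rw [hrw, Real.norm_eq_abs]
    exact hXn
  have hd2 := hasSum_sq_of_hasSum φ hd
  have hdn : ‖d‖ ≤ Real.sqrt (∑' n, lam n ^ 2 * B n ^ 2) := by
    have h1 : ‖d‖ ^ 2 ≤ ∑' n, lam n ^ 2 * B n ^ 2 := by
      rw [← hd2.tsum_eq]
      exact Summable.tsum_le_tsum hesq hd2.summable hsum
    calc ‖d‖ = Real.sqrt (‖d‖ ^ 2) := (Real.sqrt_sq (norm_nonneg d)).symm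
      _ ≤ _ := Real.sqrt_le_sqrt h1
  exact ⟨d, hd, hUderiv, hdn⟩

/-- if moreover `a ∈ L^∞([0,T])` and `Σ λ_n² B_n² < ∞`, then at every
`t₀ ∈ [0,T]` at which `A` is differentiable with `A'(t₀) = a(t₀)`, the `L²`-valued map
`t ↦ u(t)` is differentiable at `t₀`, with derivative
`−a(t₀) Σ λ_n B_n e^{−λ_n A(t₀)} φ_n` (the series converging in `L²`), and
`‖∂_t u(t₀)‖ ≤ ‖a‖_{L^∞} (Σ λ_n² B_n²)^{1/2}`. -/
theorem stmt1
    (T a₀ : ℝ) (hT : 0 < T) (ha₀ : 0 < a₀)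
    (a : ℝ → ℝ) (haInt : IntervalIntegrable a volume 0 T)
    (ha : ∀ᵐ t ∂(volume.restrict (Icc (0:ℝ) T)), a₀ ≤ a t)
    (haBdd : MemLp a ⊤ (volume.restrict (Icc (0:ℝ) T)))
    (φ : HilbertBasis ℕ ℝ L2) (lam : ℕ → ℝ) (hlam : ∀ n, 0 ≤ lam n)
    (u₀ : L2)
    (hsum : Summable (fun n => (lam n) ^ 2 * ⟪u₀, φ n⟫ ^ 2))
    (t₀ : ℝ) (ht₀ : t₀ ∈ Icc (0:ℝ) T)
    (hA : HasDerivWithinAt (fun t => ∫ τ in (0:ℝ)..t, a τ) (a t₀) (Icc (0:ℝ) T) t₀) :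
    ∃ d : L2,
      HasSum (fun n =>
        (lam n * ⟪u₀, φ n⟫ * Real.exp (-(lam n) * ∫ τ in (0:ℝ)..t₀, a τ)) • φ n) d ∧
      HasDerivWithinAt
        (fun t => ∑' n, (⟪u₀, φ n⟫ * Real.exp (-(lam n) * ∫ τ in (0:ℝ)..t, a τ)) • φ n)
        (-(a t₀) • d) (Icc (0:ℝ) T) t₀ ∧
      ‖(-(a t₀)) • d‖ ≤
        (eLpNorm a ⊤ (volume.restrict (Icc (0:ℝ) T))).toReal *
          Real.sqrt (∑' n, (lam n) ^ 2 * ⟪u₀, φ n⟫ ^ 2) := by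
  set A : ℝ → ℝ := fun t => ∫ τ in (0:ℝ)..t, a τ with hAdef
  set M : ℝ := (eLpNorm a ⊤ (volume.restrict (Icc (0:ℝ) T))).toReal with hMdef
  have hM0 : 0 ≤ M := ENNReal.toReal_nonneg
  -- a.e. upper bound
  have hM_ae : ∀ᵐ x ∂(volume.restrict (Icc (0:ℝ) T)), a x ≤ M := by
    have hfin : eLpNormEssSup a (volume.restrict (Icc (0:ℝ) T)) ≠ ⊤ := by
      have h2 := haBdd.2
      rw [eLpNorm_exponent_top] at h2
      exact h2.ne
    filter_upwards [MeasureTheory.ae_le_eLpNormEssSup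
      (f := a) (μ := volume.restrict (Icc (0:ℝ) T))] with x hx
    have h3 : ((‖a x‖₊ : ℝ≥0∞)).toReal
        ≤ (eLpNormEssSup a (volume.restrict (Icc (0:ℝ) T))).toReal :=
      ENNReal.toReal_mono hfin hx
    have h4 : ((‖a x‖₊ : ℝ≥0∞)).toReal = |a x| := by
      simp [Real.norm_eq_abs]
    rw [h4] at h3
    have h5 : M = (eLpNormEssSup a (volume.restrict (Icc (0:ℝ) T))).toReal := by
      rw [hMdef, eLpNorm_exponent_top]
    rw [h5]
    exact (le_abs_self _).trans h3
  -- interval integrability and bounds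
  have hIntSub : ∀ u v : ℝ, 0 ≤ u → u ≤ v → v ≤ T → IntervalIntegrable a volume u v := by
    intro u v hu huv hvT
    refine haInt.mono_set ?_
    rw [uIcc_of_le huv, uIcc_of_le hT.le]
    exact Icc_subset_Icc hu hvT
  have hIntLB : ∀ u v : ℝ, 0 ≤ u → u ≤ v → v ≤ T → a₀ * (v - u) ≤ ∫ τ in u..v, a τ := by
    intro u v hu huv hvT
    have hae : ∀ᵐ x ∂(volume.restrict (Icc u v)), (fun _ : ℝ => a₀) x ≤ a x :=
      ae_restrict_of_ae_restrict_of_subset (Icc_subset_Icc hu hvT) ha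
    have h1 := intervalIntegral.integral_mono_ae_restrict (μ := volume) huv
      intervalIntegrable_const (hIntSub u v hu huv hvT) hae
    simpa [mul_comm] using h1
  have hIntUB : ∀ u v : ℝ, 0 ≤ u → u ≤ v → v ≤ T → (∫ τ in u..v, a τ) ≤ M * (v - u) := by
    intro u v hu huv hvT
    have hae : ∀ᵐ x ∂(volume.restrict (Icc u v)), a x ≤ (fun _ : ℝ => M) x :=
      ae_restrict_of_ae_restrict_of_subset (Icc_subset_Icc hu hvT) hM_ae
    have h1 := intervalIntegral.integral_mono_ae_restrict (μ := volume) huv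
      (hIntSub u v hu huv hvT) intervalIntegrable_const hae
    simpa [mul_comm, hMdef] using h1
  have hA0 : ∀ t ∈ Icc (0:ℝ) T, 0 ≤ A t := by
    intro t htm
    have h1 := hIntLB 0 t le_rfl htm.1 htm.2
    have h2 : 0 ≤ a₀ * (t - 0) := by nlinarith [htm.1]
    simp only [hAdef]
    linarith
  have hAsub : ∀ u v : ℝ, 0 ≤ u → u ≤ T → 0 ≤ v → v ≤ T →
      A v - A u = ∫ τ in u..v, a τ := by
    intro u v hu huT hv hvT
    simp only [hAdef]
    exact intervalIntegral.integral_interval_sub_left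
      (hIntSub 0 v le_rfl hv hvT) (hIntSub 0 u le_rfl hu huT)
  have key : ∀ u v : ℝ, 0 ≤ u → u < v → v ≤ T →
      a₀ ≤ (A v - A u) / (v - u) ∧ (A v - A u) / (v - u) ≤ M := by
    intro u v hu huv hvT
    have hpos : 0 < v - u := sub_pos.2 huv
    rw [hAsub u v hu (le_trans huv.le hvT) (hu.trans huv.le) hvT]
    constructor
    · rw [le_div_iff₀ hpos]
      have h1 := hIntLB u v hu huv.le hvT
      linarith
    · rw [div_le_iff₀ hpos]
      have h1 := hIntUB u v hu huv.le hvT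
      linarith
  have hslope : ∀ t ∈ Icc (0:ℝ) T \ {t₀}, a₀ ≤ slope A t₀ t ∧ slope A t₀ t ≤ M := by
    intro t ht
    obtain ⟨htm, htne⟩ := ht
    have htne' : t ≠ t₀ := htne
    rcases lt_or_gt_of_ne htne' with hlt | hgt
    · have hk := key t t₀ htm.1 hlt ht₀.2
      have hsl : slope A t₀ t = (A t₀ - A t) / (t₀ - t) := by
        rw [slope_def_field, ← neg_sub (A t₀) (A t), ← neg_sub t₀ t, neg_div_neg_eq]
      rw [hsl]; exact hk
    · have hk := key t₀ t ht₀.1 hgt htm.2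
      have hsl : slope A t₀ t = (A t - A t₀) / (t - t₀) := slope_def_field A t₀ t
      rw [hsl]; exact hk
  have hne : (𝓝[Icc (0:ℝ) T \ {t₀}] t₀).NeBot := by
    rcases eq_or_lt_of_le ht₀.2 with heq | hlt
    · have h0 : (0:ℝ) < t₀ := by rw [heq]; exact hT
      have hsub : Ioo (0:ℝ) t₀ ⊆ Icc (0:ℝ) T \ {t₀} := by
        intro x hx
        refine ⟨⟨hx.1.le, ?_⟩, ne_of_lt hx.2⟩
        rw [← heq]; exact hx.2.le
      have hclos : t₀ ∈ closure (Ioo (0:ℝ) t₀) := by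
        rw [closure_Ioo (ne_of_lt h0)]
        exact right_mem_Icc.2 h0.le
      exact (mem_closure_iff_nhdsWithin_neBot.1 hclos).mono (nhdsWithin_mono _ hsub)
    · have hsub : Ioo t₀ T ⊆ Icc (0:ℝ) T \ {t₀} := by
        intro x hx
        exact ⟨⟨ht₀.1.trans hx.1.le, hx.2.le⟩, (ne_of_gt hx.1)⟩
      have hclos : t₀ ∈ closure (Ioo t₀ T) := by
        rw [closure_Ioo (ne_of_lt hlt)]
        exact left_mem_Icc.2 hlt.le
      exact (mem_closure_iff_nhdsWithin_neBot.1 hclos).mono (nhdsWithin_mono _ hsub)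
  have htend := hasDerivWithinAt_iff_tendsto_slope.1 hA
  haveI := hne
  have hub : a t₀ ≤ M :=
    le_of_tendsto htend (eventually_nhdsWithin_of_forall fun t ht => (hslope t ht).2)
  have hlb : a₀ ≤ a t₀ :=
    ge_of_tendsto htend (eventually_nhdsWithin_of_forall fun t ht => (hslope t ht).1)
  have hat₀ : 0 ≤ a t₀ := le_trans ha₀.le hlb
  have hsumB : Summable fun n => (⟪u₀, φ n⟫ : ℝ) ^ 2 := by
    have h1 := φ.summable_inner_mul_inner u₀ u₀
    refine h1.congr fun n => ?_
    rw [real_inner_comm (φ n) u₀, ← sq]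
  obtain ⟨d, hd, hUderiv, hdn⟩ :=
    core φ lam (fun n => ⟪u₀, φ n⟫) hlam hsumB hsum (A t₀) (hA0 t₀ ht₀)
  refine ⟨d, hd, ?_, ?_⟩
  · have hmaps : MapsTo A (Icc (0:ℝ) T) (Ici (0:ℝ)) := fun t ht => hA0 t ht
    have hcomp := HasDerivWithinAt.scomp_of_eq t₀ hUderiv hA hmaps rfl
    rw [neg_smul, ← smul_neg]
    exact hcomp
  · calc ‖(-(a t₀)) • d‖ = |a t₀| * ‖d‖ := by
          rw [norm_smul, Real.norm_eq_abs, abs_neg]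
      _ = a t₀ * ‖d‖ := by rw [abs_of_nonneg hat₀]
      _ ≤ M * Real.sqrt (∑' n, lam n ^ 2 * ⟪u₀, φ n⟫ ^ 2) :=
          mul_le_mul hub hdn (norm_nonneg d) hM0

end
end

section
/- For every t ∈ [0,T], the series Σ_{n≥1} B_n e^{−λ_n A(t)} φ_n″ converges in L²(0,1) and satisfies ‖Σ_{n≥1} B_n e^{−λ_n A(t)} φ_n″‖_{L²(0,1)} ≤ ‖u₀″‖_{L²(0,1)} + 2 ‖q‖_{L^∞(0,1)} ‖u₀‖_{L²(0,1)}. -/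
open MeasureTheory Set
open scoped RealInnerProductSpace

noncomputable section

/-- `φ ∈ L²(0,1)` is a Dirichlet eigenfunction of `−d²/dx² + q` with eigenvalue `lam`,
witnessed by a representative `Φ` which together with its derivative `Φd` is absolutely
continuous on `[0,1]`, has second derivative `Φdd ∈ L²(0,1)`, satisfies the Dirichlet
boundary conditions, and solves `−Φ″ + qΦ = lam Φ` a.e. on `(0,1)`. -/
def IsDirichletEigenfunctionWith (q : ℝ → ℝ) (lam : ℝ) (φ : L2)
    (Φ Φd Φdd : ℝ → ℝ) : Prop :=
  (∀ᵐ x ∂mu01, (φ : ℝ → ℝ) x = Φ x) ∧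
  IntervalIntegrable Φd volume 0 1 ∧
  IntervalIntegrable Φdd volume 0 1 ∧
  (∀ x ∈ Icc (0:ℝ) 1, Φ x = Φ 0 + ∫ s in (0:ℝ)..x, Φd s) ∧
  (∀ x ∈ Icc (0:ℝ) 1, Φd x = Φd 0 + ∫ s in (0:ℝ)..x, Φdd s) ∧
  MemLp Φdd 2 mu01 ∧
  Φ 0 = 0 ∧ Φ 1 = 0 ∧
  (∀ᵐ x ∂mu01, -Φdd x + q x * Φ x = lam * Φ x)

/-- `u₀ ∈ L²(0,1)` has a representative `U` which together with its derivative `Ud` is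
absolutely continuous on `[0,1]`, with second derivative `Udd ∈ L²(0,1)`, and
`U(0) = U(1) = 0`. -/
def IsH2DirichletWith (u₀ : L2) (U Ud Udd : ℝ → ℝ) : Prop :=
  (∀ᵐ x ∂mu01, (u₀ : ℝ → ℝ) x = U x) ∧
  IntervalIntegrable Ud volume 0 1 ∧
  IntervalIntegrable Udd volume 0 1 ∧
  (∀ x ∈ Icc (0:ℝ) 1, U x = U 0 + ∫ s in (0:ℝ)..x, Ud s) ∧
  (∀ x ∈ Icc (0:ℝ) 1, Ud x = Ud 0 + ∫ s in (0:ℝ)..x, Udd s) ∧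
  MemLp Udd 2 mu01 ∧
  U 0 = 0 ∧ U 1 = 0

/-! ### Auxiliary lemmas -/

lemma mu01_int (h : ℝ → ℝ) : ∫ x, h x ∂mu01 = ∫ x in (0:ℝ)..1, h x := by
  rw [intervalIntegral.integral_of_le (by norm_num : (0:ℝ) ≤ 1),
    MeasureTheory.integral_Ioc_eq_integral_Ioo]

lemma swap_triangle {f g : ℝ → ℝ} (hf : IntervalIntegrable f volume 0 1)
    (hg : IntervalIntegrable g volume 0 1) :
    (∫ x in (0:ℝ)..1, f x * ∫ s in (0:ℝ)..x, g s)
      = ∫ s in (0:ℝ)..1, g s * ∫ x in s..(1:ℝ), f x := by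
  have hfI : IntegrableOn f (Ioo (0:ℝ) 1) volume := hf.1.mono_set Ioo_subset_Ioc_self
  have hgI : IntegrableOn g (Ioo (0:ℝ) 1) volume := hg.1.mono_set Ioo_subset_Ioc_self
  have hmeas : MeasurableSet {p : ℝ × ℝ | p.2 ≤ p.1} :=
    measurableSet_le measurable_snd measurable_fst
  have hFint : Integrable ({p : ℝ × ℝ | p.2 ≤ p.1}.indicator (fun p => f p.1 * g p.2))
      (mu01.prod mu01) := (Integrable.mul_prod hfI hgI).indicator hmeas
  have hswap := MeasureTheory.integral_integral_swap (μ := mu01) (ν := mu01)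
    (f := fun x s => {p : ℝ × ℝ | p.2 ≤ p.1}.indicator (fun p => f p.1 * g p.2) (x, s)) hFint
  have hL : (∫ x, ∫ s, {p : ℝ × ℝ | p.2 ≤ p.1}.indicator (fun p => f p.1 * g p.2) (x, s) ∂mu01 ∂mu01)
      = ∫ x in Ioo (0:ℝ) 1, f x * ∫ s in (0:ℝ)..x, g s := by
    refine integral_congr_ae ?_
    filter_upwards [ae_restrict_mem measurableSet_Ioo] with x hx
    have hfun : (fun s => {p : ℝ × ℝ | p.2 ≤ p.1}.indicator (fun p => f p.1 * g p.2) (x, s))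
        = (Iic x).indicator (fun s => f x * g s) := by
      ext s; by_cases h : s ≤ x <;>
        simp [Set.indicator_apply, Set.mem_setOf_eq, Set.mem_Iic, h]
    rw [hfun, integral_indicator measurableSet_Iic,
      Measure.restrict_restrict measurableSet_Iic]
    have hset : Iic x ∩ Ioo (0:ℝ) 1 = Ioc (0:ℝ) x := by
      ext s
      constructor
      · rintro ⟨h1, h2, h3⟩; exact ⟨h2, h1⟩
      · rintro ⟨h1, h2⟩; exact ⟨h2, h1, lt_of_le_of_lt h2 hx.2⟩
    rw [hset, MeasureTheory.integral_const_mul, ← intervalIntegral.integral_of_le hx.1.le]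
  have hR : (∫ s, ∫ x, {p : ℝ × ℝ | p.2 ≤ p.1}.indicator (fun p => f p.1 * g p.2) (x, s) ∂mu01 ∂mu01)
      = ∫ s in Ioo (0:ℝ) 1, g s * ∫ x in s..(1:ℝ), f x := by
    refine integral_congr_ae ?_
    filter_upwards [ae_restrict_mem measurableSet_Ioo] with s hs
    have hfun : (fun x => {p : ℝ × ℝ | p.2 ≤ p.1}.indicator (fun p => f p.1 * g p.2) (x, s))
        = (Ici s).indicator (fun x => f x * g s) := by
      ext x; by_cases h : s ≤ x <;>
        simp [Set.indicator_apply, Set.mem_setOf_eq, Set.mem_Ici, h]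
    rw [hfun, integral_indicator measurableSet_Ici,
      Measure.restrict_restrict measurableSet_Ici]
    have hset : Ici s ∩ Ioo (0:ℝ) 1 = Ico s 1 := by
      ext x
      constructor
      · rintro ⟨h1, h2, h3⟩; exact ⟨h1, h3⟩
      · rintro ⟨h1, h2⟩; exact ⟨h1, lt_of_lt_of_le hs.1 h1, h2⟩
    rw [hset, MeasureTheory.integral_mul_const, MeasureTheory.integral_Ico_eq_integral_Ioo,
      ← MeasureTheory.integral_Ioc_eq_integral_Ioo, ← intervalIntegral.integral_of_le hs.2.le,
      mul_comm]
  rw [intervalIntegral.integral_of_le (by norm_num : (0:ℝ) ≤ 1),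
    MeasureTheory.integral_Ioc_eq_integral_Ioo,
    intervalIntegral.integral_of_le (b := (1:ℝ)) (by norm_num : (0:ℝ) ≤ 1),
    MeasureTheory.integral_Ioc_eq_integral_Ioo]
  rw [hL, hR] at hswap
  exact hswap

lemma ibp_one {f G Gd : ℝ → ℝ} (hf : IntervalIntegrable f volume 0 1)
    (hGd : IntervalIntegrable Gd volume 0 1)
    (hG : ∀ x ∈ Icc (0:ℝ) 1, G x = G 0 + ∫ s in (0:ℝ)..x, Gd s) (hG0 : G 0 = 0) :
    (∫ x in (0:ℝ)..1, f x * G x) = ∫ s in (0:ℝ)..1, Gd s * ∫ x in s..(1:ℝ), f x := by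
  rw [← swap_triangle hf hGd]
  refine intervalIntegral.integral_congr (fun x hx => ?_)
  rw [uIcc_of_le (by norm_num : (0:ℝ) ≤ 1)] at hx
  rw [hG x hx, hG0, zero_add]

lemma ibp_two {Fd Fdd G Gd : ℝ → ℝ}
    (hFdd : IntervalIntegrable Fdd volume 0 1)
    (hFd : ∀ x ∈ Icc (0:ℝ) 1, Fd x = Fd 0 + ∫ s in (0:ℝ)..x, Fdd s)
    (hGd : IntervalIntegrable Gd volume 0 1)
    (hG : ∀ x ∈ Icc (0:ℝ) 1, G x = G 0 + ∫ s in (0:ℝ)..x, Gd s)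
    (hG0 : G 0 = 0) (hG1 : G 1 = 0) :
    (∫ x in (0:ℝ)..1, Fdd x * G x) = - ∫ s in (0:ℝ)..1, Fd s * Gd s := by
  have h01 : (0:ℝ) ≤ 1 := by norm_num
  have hu : uIcc (0:ℝ) 1 = Icc (0:ℝ) 1 := uIcc_of_le h01
  have hFdc : ContinuousOn Fd (Icc (0:ℝ) 1) := by
    have hprim : ContinuousOn (fun x => Fd 0 + ∫ s in (0:ℝ)..x, Fdd s) (Icc (0:ℝ) 1) := by
      refine continuousOn_const.add ?_
      have hInt : IntegrableOn Fdd (uIcc (0:ℝ) 1) volume := by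
        rw [hu, integrableOn_Icc_iff_integrableOn_Ioc]
        exact hFdd.1
      simpa [hu] using intervalIntegral.continuousOn_primitive_interval hInt
    exact hprim.congr hFd
  rw [ibp_one hFdd hGd hG hG0]
  have hstep : (∫ s in (0:ℝ)..1, Gd s * ∫ x in s..(1:ℝ), Fdd x)
      = ∫ s in (0:ℝ)..1, (Gd s * Fd 1 - Gd s * Fd s) := by
    refine intervalIntegral.integral_congr (fun s hs => ?_)
    rw [hu] at hs
    have h2 : IntervalIntegrable Fdd volume 0 s := by
      apply hFdd.mono_set
      rw [hu, uIcc_of_le hs.1]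
      exact Icc_subset_Icc le_rfl hs.2
    have hsub : (∫ x in s..(1:ℝ), Fdd x)
        = (∫ x in (0:ℝ)..1, Fdd x) - ∫ x in (0:ℝ)..s, Fdd x :=
      (intervalIntegral.integral_interval_sub_left hFdd h2).symm
    have hFd1 := hFd 1 (by simp [h01])
    have hFds := hFd s hs
    have hval : (∫ x in s..(1:ℝ), Fdd x) = Fd 1 - Fd s := by
      rw [hsub]
      have e1 : (∫ x in (0:ℝ)..1, Fdd x) = Fd 1 - Fd 0 := by rw [hFd1]; ring
      have e2 : (∫ x in (0:ℝ)..s, Fdd x) = Fd s - Fd 0 := by rw [hFds]; ring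
      rw [e1, e2]; ring
    rw [hval]; ring
  rw [hstep]
  have hGdFd : IntervalIntegrable (fun s => Gd s * Fd s) volume 0 1 := by
    apply hGd.mul_continuousOn
    rw [hu]; exact hFdc
  have hGdc : IntervalIntegrable (fun s => Gd s * Fd 1) volume 0 1 := hGd.mul_const _
  rw [intervalIntegral.integral_sub hGdc hGdFd, intervalIntegral.integral_mul_const]
  have hGint : (∫ s in (0:ℝ)..1, Gd s) = 0 := by
    have := hG 1 (by simp [h01])
    rw [hG0, zero_add] at this
    rw [← this, hG1]
  rw [hGint, zero_mul, zero_sub]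
  congr 1
  exact intervalIntegral.integral_congr (fun s _ => mul_comm _ _)

lemma ibp_symm {U Ud Udd Φ Φd Φdd : ℝ → ℝ}
    (hUd : IntervalIntegrable Ud volume 0 1) (hUdd : IntervalIntegrable Udd volume 0 1)
    (hU : ∀ x ∈ Icc (0:ℝ) 1, U x = U 0 + ∫ s in (0:ℝ)..x, Ud s)
    (hUd' : ∀ x ∈ Icc (0:ℝ) 1, Ud x = Ud 0 + ∫ s in (0:ℝ)..x, Udd s)
    (hU0 : U 0 = 0) (hU1 : U 1 = 0)
    (hΦd : IntervalIntegrable Φd volume 0 1) (hΦdd : IntervalIntegrable Φdd volume 0 1)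
    (hΦ : ∀ x ∈ Icc (0:ℝ) 1, Φ x = Φ 0 + ∫ s in (0:ℝ)..x, Φd s)
    (hΦd' : ∀ x ∈ Icc (0:ℝ) 1, Φd x = Φd 0 + ∫ s in (0:ℝ)..x, Φdd s)
    (hΦ0 : Φ 0 = 0) (hΦ1 : Φ 1 = 0) :
    (∫ x in (0:ℝ)..1, Udd x * Φ x) = ∫ x in (0:ℝ)..1, U x * Φdd x := by
  rw [ibp_two hUdd hUd' hΦd hΦ hΦ0 hΦ1]
  have h2 : (∫ x in (0:ℝ)..1, Φdd x * U x) = - ∫ s in (0:ℝ)..1, Φd s * Ud s :=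
    ibp_two hΦdd hΦd' hUd hU hU0 hU1
  have h3 : (∫ x in (0:ℝ)..1, U x * Φdd x) = ∫ x in (0:ℝ)..1, Φdd x * U x :=
    intervalIntegral.integral_congr (fun s _ => mul_comm _ _)
  rw [h3, h2]
  congr 1
  exact intervalIntegral.integral_congr (fun s _ => mul_comm _ _)

section MulQ

variable {q : ℝ → ℝ}

lemma memMul (hq : MemLp q ⊤ mu01) (f : L2) : MemLp (q • ((f : L2) : ℝ → ℝ)) 2 mu01 :=
  (Lp.memLp f).smul hq

/-- Multiplication by the `L^∞` function `q`, as a continuous linear map on `L²(0,1)`. -/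
def mulQ (hq : MemLp q ⊤ mu01) : L2 →L[ℝ] L2 :=
  LinearMap.mkContinuous
    { toFun := fun f => (memMul hq f).toLp (q • ((f : L2) : ℝ → ℝ))
      map_add' := fun f g => by
        rw [← MemLp.toLp_add]
        refine MemLp.toLp_congr _ _ ?_
        filter_upwards [Lp.coeFn_add f g] with x hx
        simp only [Pi.smul_apply', Pi.add_apply, hx, smul_add]
      map_smul' := fun c f => by
        simp only [RingHom.id_apply]
        rw [← MemLp.toLp_const_smul]
        refine MemLp.toLp_congr _ _ ?_
        filter_upwards [Lp.coeFn_smul c f] with x hx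
        simp only [Pi.smul_apply', hx, Pi.smul_apply, smul_eq_mul, Pi.mul_apply]
        ring }
    ((eLpNorm q ⊤ mu01).toReal)
    (fun f => by
      simp only [LinearMap.coe_mk, AddHom.coe_mk]
      rw [Lp.norm_toLp]
      have hb : eLpNorm (q • ((f : L2) : ℝ → ℝ)) 2 mu01
          ≤ eLpNorm q ⊤ mu01 * eLpNorm ((f : L2) : ℝ → ℝ) 2 mu01 :=
        eLpNorm_smul_le_eLpNorm_top_mul_eLpNorm 2 (Lp.aestronglyMeasurable f) q
      calc (eLpNorm (q • ((f : L2) : ℝ → ℝ)) 2 mu01).toReal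
          ≤ (eLpNorm q ⊤ mu01 * eLpNorm ((f : L2) : ℝ → ℝ) 2 mu01).toReal :=
            ENNReal.toReal_mono (ENNReal.mul_ne_top hq.2.ne (Lp.memLp f).2.ne) hb
        _ = (eLpNorm q ⊤ mu01).toReal * ‖f‖ := by
            rw [ENNReal.toReal_mul, Lp.norm_def])

lemma mulQ_coeFn (hq : MemLp q ⊤ mu01) (f : L2) :
    (mulQ hq f : ℝ → ℝ) =ᵐ[mu01] fun x => q x * ((f : L2) : ℝ → ℝ) x := by
  filter_upwards [MemLp.coeFn_toLp (memMul hq f)] with x hx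
  simpa [mulQ, Pi.smul_apply', smul_eq_mul] using hx

lemma mulQ_norm_le (hq : MemLp q ⊤ mu01) (f : L2) :
    ‖mulQ hq f‖ ≤ (eLpNorm q ⊤ mu01).toReal * ‖f‖ := by
  refine le_trans ((mulQ hq).le_opNorm f) ?_
  gcongr
  exact LinearMap.mkContinuous_norm_le _ ENNReal.toReal_nonneg _

lemma inner_mulQ (hq : MemLp q ⊤ mu01) (f g : L2) :
    ⟪mulQ hq f, g⟫ = ⟪f, mulQ hq g⟫ := by
  rw [L2.inner_def, L2.inner_def]
  refine integral_congr_ae ?_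
  filter_upwards [mulQ_coeFn hq f, mulQ_coeFn hq g] with x h1 h2
  rw [h1, h2]
  simp only [RCLike.inner_apply, conj_trivial]
  ring

end MulQ

lemma memℓp_of_le {d : ℕ → ℝ} (f : lp (fun _ : ℕ => ℝ) 2) (h : ∀ n, ‖d n‖ ≤ ‖f n‖) :
    Memℓp d 2 := by
  apply memℓp_gen
  refine Summable.of_nonneg_of_le (fun n => ?_) (fun n => ?_)
    ((lp.memℓp f).summable (by norm_num))
  · positivity
  · exact Real.rpow_le_rpow (norm_nonneg _) (h n) (by positivity)

lemma lp_norm_le {d : ℕ → ℝ} (f : lp (fun _ : ℕ => ℝ) 2) (h : ∀ n, ‖d n‖ ≤ ‖f n‖)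
    (hd : Memℓp d 2) : ‖(⟨d, hd⟩ : lp (fun _ : ℕ => ℝ) 2)‖ ≤ ‖f‖ := by
  refine lp.norm_le_of_tsum_le (by norm_num) (norm_nonneg f) ?_
  rw [lp.norm_rpow_eq_tsum (by norm_num) f]
  refine Summable.tsum_le_tsum (fun n => Real.rpow_le_rpow (norm_nonneg _) (h n) (by positivity))
    (hd.summable (by norm_num)) ((lp.memℓp f).summable (by norm_num))

/-- for every `t ∈ [0,T]` the series `Σ B_n e^{−λ_n A(t)} φ_n″` converges in
`L²(0,1)` and its sum has norm at most `‖u₀″‖_{L²} + 2 ‖q‖_{L^∞} ‖u₀‖_{L²}`. -/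
theorem stmt5
    (q : ℝ → ℝ) (hq : MemLp q ⊤ mu01)
    (φ : HilbertBasis ℕ ℝ L2) (lam : ℕ → ℝ) (hlam : ∀ n, 0 ≤ lam n)
    (Φ Φd Φdd : ℕ → ℝ → ℝ)
    (hφ : ∀ n, IsDirichletEigenfunctionWith q (lam n) (φ n) (Φ n) (Φd n) (Φdd n))
    (hmem : ∀ n, MemLp (Φdd n) 2 mu01)
    (T a₀ : ℝ) (hT : 0 < T) (ha₀ : 0 < a₀)
    (a : ℝ → ℝ) (haInt : IntervalIntegrable a volume 0 T)
    (ha : ∀ᵐ t ∂(volume.restrict (Icc (0:ℝ) T)), a₀ ≤ a t)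
    (u₀ : L2) (U Ud Udd : ℝ → ℝ)
    (hu₀ : IsH2DirichletWith u₀ U Ud Udd) :
    ∀ t ∈ Icc (0:ℝ) T, ∃ v : L2,
      HasSum (fun n =>
        (⟪u₀, φ n⟫ * Real.exp (-(lam n) * ∫ τ in (0:ℝ)..t, a τ)) • (hmem n).toLp (Φdd n)) v ∧
      ‖v‖ ≤ (eLpNorm Udd 2 mu01).toReal + 2 * (eLpNorm q ⊤ mu01).toReal * ‖u₀‖ := by
  obtain ⟨hu₀c, hUdI, hUddI, hUac, hUdac, hUddmem, hU0, hU1⟩ := hu₀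
  intro t ht
  -- the exponential factors are bounded by 1
  have hAt : 0 ≤ ∫ τ in (0:ℝ)..t, a τ := by
    apply intervalIntegral.integral_nonneg_of_ae_restrict ht.1
    have hsub : Icc (0:ℝ) t ⊆ Icc 0 T := Icc_subset_Icc le_rfl ht.2
    filter_upwards [ae_restrict_of_ae_restrict_of_subset hsub ha] with x hx
    exact le_trans ha₀.le hx
  set e : ℕ → ℝ := fun n => Real.exp (-(lam n) * ∫ τ in (0:ℝ)..t, a τ) with he_def
  have he1 : ∀ n, |e n| ≤ 1 := by
    intro n
    rw [he_def, abs_of_pos (Real.exp_pos _)]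
    refine Real.exp_le_one_iff.mpr ?_
    have := mul_nonneg (hlam n) hAt
    linarith
  -- the second derivative of `φ n` as an element of `L²`
  have hpsi : ∀ n, (hmem n).toLp (Φdd n) = mulQ hq (φ n) - lam n • (φ n) := by
    intro n
    obtain ⟨hc, -, -, -, -, -, -, -, hode⟩ := hφ n
    apply Lp.ext
    filter_upwards [MemLp.coeFn_toLp (hmem n), mulQ_coeFn hq (φ n),
      Lp.coeFn_sub (mulQ hq (φ n)) (lam n • φ n), Lp.coeFn_smul (lam n) (φ n), hc, hode]
      with x h1 h2 h3 h4 h5 h6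
    rw [h1, h3, Pi.sub_apply, h2, h4, Pi.smul_apply, smul_eq_mul, h5] at *
    linarith
  -- integration by parts
  have hinner_ibp : ∀ n, ⟪u₀, (hmem n).toLp (Φdd n)⟫ = ⟪hUddmem.toLp Udd, φ n⟫ := by
    intro n
    obtain ⟨hc, hΦdI, hΦddI, hΦac, hΦdac, -, hΦ0, hΦ1, -⟩ := hφ n
    rw [L2.inner_def, L2.inner_def]
    have h1 : (∫ x, ⟪((u₀ : L2) : ℝ → ℝ) x, (((hmem n).toLp (Φdd n) : L2) : ℝ → ℝ) x⟫ ∂mu01)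
        = ∫ x, U x * Φdd n x ∂mu01 := by
      refine integral_congr_ae ?_
      filter_upwards [hu₀c, MemLp.coeFn_toLp (hmem n)] with x e1 e2
      rw [RCLike.inner_apply, conj_trivial, e1, e2]
      ring
    have h2 : (∫ x, ⟪((hUddmem.toLp Udd : L2) : ℝ → ℝ) x, ((φ n : L2) : ℝ → ℝ) x⟫ ∂mu01)
        = ∫ x, Udd x * Φ n x ∂mu01 := by
      refine integral_congr_ae ?_
      filter_upwards [MemLp.coeFn_toLp hUddmem, hc] with x e1 e2
      rw [RCLike.inner_apply, conj_trivial, e1, e2]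
      ring
    rw [h1, h2, mu01_int (fun x => U x * Φdd n x), mu01_int (fun x => Udd x * Φ n x)]
    exact (ibp_symm hUdI hUddI hUac hUdac hU0 hU1 hΦdI hΦddI hΦac hΦdac hΦ0 hΦ1).symm
  -- the element `q·u₀ − u₀″` of `L²`
  set g0 : L2 := mulQ hq u₀ - hUddmem.toLp Udd with hg0_def
  have hB : ∀ n, φ.repr u₀ n = ⟪u₀, φ n⟫ := by
    intro n
    rw [HilbertBasis.repr_apply_apply, real_inner_comm]
  have hrepr : ∀ n, φ.repr g0 n = lam n * φ.repr u₀ n := by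
    intro n
    rw [HilbertBasis.repr_apply_apply, HilbertBasis.repr_apply_apply]
    show ⟪(φ n : L2), g0⟫ = lam n * ⟪(φ n : L2), u₀⟫
    rw [real_inner_comm g0 (φ n), real_inner_comm u₀ (φ n)]
    have h1 : ⟪g0, φ n⟫ = ⟪mulQ hq u₀, φ n⟫ - ⟪hUddmem.toLp Udd, φ n⟫ := by
      rw [hg0_def, inner_sub_left]
    have h2 : ⟪u₀, (hmem n).toLp (Φdd n)⟫ = ⟪u₀, mulQ hq (φ n)⟫ - lam n * ⟪u₀, φ n⟫ := by
      rw [hpsi n, inner_sub_right, real_inner_smul_right]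
    have h3 := hinner_ibp n
    have h4 := inner_mulQ hq u₀ (φ n)
    rw [h1, h4]
    linarith
  -- the two ℓ² sequences
  have hbound1 : ∀ n, ‖e n * φ.repr u₀ n‖ ≤ ‖φ.repr u₀ n‖ := by
    intro n
    rw [norm_mul]
    exact mul_le_of_le_one_left (norm_nonneg _) (by simpa [Real.norm_eq_abs] using he1 n)
  have hbound2 : ∀ n, ‖e n * φ.repr g0 n‖ ≤ ‖φ.repr g0 n‖ := by
    intro n
    rw [norm_mul]
    exact mul_le_of_le_one_left (norm_nonneg _) (by simpa [Real.norm_eq_abs] using he1 n)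
  have hBc : Memℓp (fun n => e n * φ.repr u₀ n) 2 := memℓp_of_le (φ.repr u₀) hbound1
  have hDc : Memℓp (fun n => e n * φ.repr g0 n) 2 := memℓp_of_le (φ.repr g0) hbound2
  set xc : L2 := φ.repr.symm ⟨fun n => e n * φ.repr u₀ n, hBc⟩ with hxc_def
  set xd : L2 := φ.repr.symm ⟨fun n => e n * φ.repr g0 n, hDc⟩ with hxd_def
  have hs1 : HasSum (fun n => (e n * φ.repr u₀ n) • φ n) xc :=
    φ.hasSum_repr_symm ⟨fun n => e n * φ.repr u₀ n, hBc⟩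
  have hs3 : HasSum (fun n => (e n * φ.repr g0 n) • φ n) xd :=
    φ.hasSum_repr_symm ⟨fun n => e n * φ.repr g0 n, hDc⟩
  have hs2 : HasSum (fun n => mulQ hq ((e n * φ.repr u₀ n) • φ n)) (mulQ hq xc) :=
    (mulQ hq).hasSum hs1
  have hs4 := hs2.sub hs3
  refine ⟨mulQ hq xc - xd, ?_, ?_⟩
  · have hterm : (fun n => (⟪u₀, φ n⟫ * e n) • (hmem n).toLp (Φdd n))
        = fun n => mulQ hq ((e n * φ.repr u₀ n) • φ n) - (e n * φ.repr g0 n) • φ n := by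
      funext n
      rw [hpsi n, (mulQ hq).map_smul, hrepr n, hB n]
      module
    rw [hterm]
    exact hs4
  · have hCq : 0 ≤ (eLpNorm q ⊤ mu01).toReal := ENNReal.toReal_nonneg
    have h1 : ‖mulQ hq xc - xd‖ ≤ ‖mulQ hq xc‖ + ‖xd‖ := norm_sub_le _ _
    have h2 : ‖mulQ hq xc‖ ≤ (eLpNorm q ⊤ mu01).toReal * ‖xc‖ := mulQ_norm_le hq xc
    have h3 : ‖xc‖ ≤ ‖u₀‖ := by
      rw [hxc_def, LinearIsometryEquiv.norm_map]
      calc ‖(⟨fun n => e n * φ.repr u₀ n, hBc⟩ : lp (fun _ : ℕ => ℝ) 2)‖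
          ≤ ‖φ.repr u₀‖ := lp_norm_le (φ.repr u₀) hbound1 hBc
        _ = ‖u₀‖ := by rw [LinearIsometryEquiv.norm_map]
    have h4 : ‖xd‖ ≤ ‖g0‖ := by
      rw [hxd_def, LinearIsometryEquiv.norm_map]
      calc ‖(⟨fun n => e n * φ.repr g0 n, hDc⟩ : lp (fun _ : ℕ => ℝ) 2)‖
          ≤ ‖φ.repr g0‖ := lp_norm_le (φ.repr g0) hbound2 hDc
        _ = ‖g0‖ := by rw [LinearIsometryEquiv.norm_map]
    have h5 : ‖g0‖ ≤ (eLpNorm q ⊤ mu01).toReal * ‖u₀‖ + (eLpNorm Udd 2 mu01).toReal := by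
      rw [hg0_def]
      refine le_trans (norm_sub_le _ _) ?_
      have := mulQ_norm_le hq u₀
      rw [Lp.norm_toLp]
      linarith
    have h6 : (eLpNorm q ⊤ mu01).toReal * ‖xc‖ ≤ (eLpNorm q ⊤ mu01).toReal * ‖u₀‖ :=
      mul_le_mul_of_nonneg_left h3 hCq
    linarith

end
end
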